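/- arXiv:2603.09581 — 3 statements merged into one kernel-verified Lean document; each statement's English description precedes it below -/
import Mathlib

section
/- Consider the RMSProp normalized dynamics λ_{t+1} = (1 - ηλ_t)^{k-2} λ_t / √(β₂ + (1-β₂)(1-ηλ_t)^{2k-2} x_t² λ_t²) with x_{t+1} = (1 - ηλ_t)x_t, k ≥ 4 even, η > 0, 0 < β₂ < 1. If η λ₀ < 1, x₀ > 0, and √β₂ > (k-2)^{k-2}/(k-1)^{k-1}, then |x_t| is eventually strictly decreasing and x_t → 0. -/
/-!
Write `u_t = η λ_t`. By Bernoulli's inequality `(1 - u)^(k-2) u ≤ (k-2)^(k-2)/(k-1)^(k-1)` for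
`u ≤ 1`, and the denominator of the `λ`-update is at least `√β₂`; so the hypothesis on `√β₂`
keeps `u_t` in `(0, 1)` for all `t`, and `x_t` stays positive and strictly decreases to some
limit `L ≥ 0`. If `L > 0`, then `u_t = 1 - x_{t+1}/x_t → 0`, hence `z_t = λ_t x_t → 0`; but
`z_{t+1}/z_t = (1 - u_t)^(k-1)/√(β₂ + (1 - β₂)(1 - u_t)^(2k-2) z_t²) → 1/√β₂ > 1`,
so the positive sequence `z_t` eventually increases, which is absurd.
-/

open Filter Topology

theorem pow_one_sub_mul_le (n : ℕ) {u : ℝ} (hu1 : u ≤ 1) :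
    (1 - u) ^ n * u ≤ (n : ℝ) ^ n / ((n : ℝ) + 1) ^ (n + 1) := by
  rcases Nat.eq_zero_or_pos n with rfl | hn
  · simpa using hu1
  have hn' : (0 : ℝ) < n := by exact_mod_cast hn
  -- Bernoulli: `a ^ (n+1) + (n+1) a ^ n b ≤ (a + b) ^ (n+1)` at `a = (n+1)(1-u)`, `a + b = n`
  have h := pow_add_mul_le_add_pow (a := ((n : ℝ) + 1) * (1 - u)) (b := n - (n + 1) * (1 - u))
    (by nlinarith) (by nlinarith) (n + 1)
  rw [Nat.add_sub_cancel, add_sub_cancel] at h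
  rw [le_div_iff₀ (by positivity)]
  refine le_of_mul_le_mul_left ?_ hn'
  calc (n : ℝ) * ((1 - u) ^ n * u * ((n : ℝ) + 1) ^ (n + 1))
      = (((n : ℝ) + 1) * (1 - u)) ^ (n + 1) +
          ((n + 1 : ℕ) : ℝ) * (((n : ℝ) + 1) * (1 - u)) ^ n * (n - (n + 1) * (1 - u)) := by
        simp only [mul_pow]; push_cast; ring
    _ ≤ (n : ℝ) ^ (n + 1) := h
    _ = n * n ^ n := by ring

theorem pow_sub_two_mul_le {k : ℕ} (hk : 2 ≤ k) {u : ℝ} (hu1 : u ≤ 1) :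
    (1 - u) ^ (k - 2) * u ≤ ((k : ℝ) - 2) ^ (k - 2) / ((k : ℝ) - 1) ^ (k - 1) := by
  have h := pow_one_sub_mul_le (k - 2) hu1
  rwa [Nat.cast_sub hk, show k - 2 + 1 = k - 1 by omega, Nat.cast_ofNat,
    show (k : ℝ) - 2 + 1 = k - 1 by ring] at h

theorem not_tendsto_zero_of_eventually_le_succ {z : ℕ → ℝ} (hz : ∀ t, 0 < z t)
    (hmono : ∀ᶠ t in atTop, z t ≤ z (t + 1)) : ¬Tendsto z atTop (𝓝 0) := by
  obtain ⟨T, hT⟩ := eventually_atTop.1 hmono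
  have hzT : ∀ t ≥ T, z T ≤ z t := fun t ht => by
    induction t, ht using Nat.le_induction with
    | base => exact le_rfl
    | succ n hn ih => exact ih.trans (hT n hn)
  intro hlim
  linarith [ge_of_tendsto hlim (eventually_atTop.2 ⟨T, hzT⟩), hz T]

namespace RMSProp

variable {k : ℕ} {η β₂ : ℝ}

theorem sqrt_le_denom (hβ1 : β₂ < 1) {u : ℝ} (hu : u < 1) (y l : ℝ) :
    √β₂ ≤ √(β₂ + (1 - β₂) * (1 - u) ^ (2 * k - 2) * y ^ 2 * l ^ 2) := by
  have h1β : 0 < 1 - β₂ := by linarith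
  have h1u : 0 < 1 - u := by linarith
  exact Real.sqrt_le_sqrt (le_add_of_nonneg_right (by positivity))

theorem mul_sharpness_update_lt_one (hk : 2 ≤ k) (hβ : 0 < β₂) (hβ1 : β₂ < 1)
    (hs : ((k : ℝ) - 2) ^ (k - 2) / ((k : ℝ) - 1) ^ (k - 1) < √β₂) {l : ℝ} (hu : η * l < 1)
    (y : ℝ) :
    η * ((1 - η * l) ^ (k - 2) * l /
      √(β₂ + (1 - β₂) * (1 - η * l) ^ (2 * k - 2) * y ^ 2 * l ^ 2)) < 1 := by
  have hsβ : 0 < √β₂ := Real.sqrt_pos.2 hβ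
  have hk' : (2 : ℝ) ≤ k := by exact_mod_cast hk
  calc η * ((1 - η * l) ^ (k - 2) * l /
        √(β₂ + (1 - β₂) * (1 - η * l) ^ (2 * k - 2) * y ^ 2 * l ^ 2))
      = (1 - η * l) ^ (k - 2) * (η * l) /
        √(β₂ + (1 - β₂) * (1 - η * l) ^ (2 * k - 2) * y ^ 2 * l ^ 2) := by ring
    _ ≤ ((k : ℝ) - 2) ^ (k - 2) / ((k : ℝ) - 1) ^ (k - 1) / √β₂ :=
        div_le_div₀ (div_nonneg (pow_nonneg (by linarith) _) (pow_nonneg (by linarith) _))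
          (pow_sub_two_mul_le hk hu.le) hsβ (sqrt_le_denom hβ1 hu y l)
    _ < 1 := (div_lt_one hsβ).2 hs

variable {lam x : ℕ → ℝ}

theorem lam_pos_and_mul_lam_lt_one_and_x_pos (hk : 2 ≤ k) (hβ : 0 < β₂) (hβ1 : β₂ < 1)
    (hs : ((k : ℝ) - 2) ^ (k - 2) / ((k : ℝ) - 1) ^ (k - 1) < √β₂)
    (hlam : ∀ t, lam (t + 1) =
      (1 - η * lam t) ^ (k - 2) * lam t /
        √(β₂ + (1 - β₂) * (1 - η * lam t) ^ (2 * k - 2) * (x t) ^ 2 * (lam t) ^ 2))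
    (hx : ∀ t, x (t + 1) = (1 - η * lam t) * x t)
    (h0 : η * lam 0 < 1) (hl0 : 0 < lam 0) (hx0 : 0 < x 0) :
    ∀ t, 0 < lam t ∧ η * lam t < 1 ∧ 0 < x t
  | 0 => ⟨hl0, h0, hx0⟩
  | t + 1 => by
    obtain ⟨hl, hu, hxt⟩ := lam_pos_and_mul_lam_lt_one_and_x_pos hk hβ hβ1 hs hlam hx h0 hl0 hx0 t
    have h1u : 0 < 1 - η * lam t := by linarith
    have hD := (Real.sqrt_pos.2 hβ).trans_le (sqrt_le_denom (k := k) hβ1 hu (x t) (lam t))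
    refine ⟨?_, ?_, ?_⟩
    · rw [hlam t]; positivity
    · rw [hlam t]; exact mul_sharpness_update_lt_one hk hβ hβ1 hs hu (x t)
    · rw [hx t]; positivity

theorem tendsto_lam_zero (hη : η ≠ 0) (hx : ∀ t, x (t + 1) = (1 - η * lam t) * x t) {L : ℝ}
    (hL : Tendsto x atTop (𝓝 L)) (hL0 : L ≠ 0) : Tendsto lam atTop (𝓝 0) := by
  have hlam : ∀ᶠ t in atTop, (x t - x (t + 1)) / (η * x t) = lam t :=
    (hL.eventually_ne hL0).mono fun t ht => by rw [hx t]; field_simp; ring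
  have hlim := (hL.sub (hL.comp (tendsto_add_atTop_nat 1))).div (hL.const_mul η)
    (mul_ne_zero hη hL0)
  simpa using hlim.congr' hlam

theorem tendsto_x_zero (hη : 0 < η) (hβ : 0 < β₂) (hβ1 : β₂ < 1)
    (hlam : ∀ t, lam (t + 1) =
      (1 - η * lam t) ^ (k - 2) * lam t /
        √(β₂ + (1 - β₂) * (1 - η * lam t) ^ (2 * k - 2) * (x t) ^ 2 * (lam t) ^ 2))
    (hx : ∀ t, x (t + 1) = (1 - η * lam t) * x t)
    (hlpos : ∀ t, 0 < lam t) (hxpos : ∀ t, 0 < x t) (hdec : ∀ t, x (t + 1) < x t) :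
    Tendsto x atTop (𝓝 0) := by
  obtain ⟨L, hL⟩ : ∃ L, Tendsto x atTop (𝓝 L) :=
    ⟨_, tendsto_atTop_ciInf (antitone_nat_of_succ_le fun t => (hdec t).le)
      ⟨0, by rintro _ ⟨t, rfl⟩; exact (hxpos t).le⟩⟩
  rcases (ge_of_tendsto' hL fun t => (hxpos t).le).eq_or_lt with rfl | hLpos
  · exact hL
  exfalso
  have hlam0 := tendsto_lam_zero hη.ne' hx hL hLpos.ne'
  have hu : Tendsto (fun t => 1 - η * lam t) atTop (𝓝 1) := by
    simpa using (hlam0.const_mul η).const_sub 1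
  have hD : Tendsto (fun t => √(β₂ + (1 - β₂) * (1 - η * lam t) ^ (2 * k - 2) * (x t) ^ 2 *
      (lam t) ^ 2)) atTop (𝓝 √β₂) := by
    simpa using ((((hu.pow _).const_mul (1 - β₂)).mul (hL.pow 2)).mul (hlam0.pow 2)).const_add
      β₂ |>.sqrt
  have hsβ : 0 < √β₂ := Real.sqrt_pos.2 hβ
  have hsβ1 : √β₂ < 1 := by simpa using Real.sqrt_lt_sqrt hβ.le hβ1
  have hratio := ((hu.pow (k - 2)).mul hu).div hD hsβ.ne'
  rw [one_pow, one_mul] at hratio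
  -- `z_t = λ_t x_t` satisfies `z_{t+1} = ratio_t * z_t` with `ratio_t → 1/√β₂ > 1`
  have hgrow : ∀ᶠ t in atTop, lam t * x t ≤ lam (t + 1) * x (t + 1) := by
    filter_upwards [hratio.eventually_const_le (one_lt_one_div hsβ hsβ1)] with t ht
    rw [Pi.div_apply] at ht
    rw [hlam t, hx t]
    exact (le_mul_of_one_le_left (mul_pos (hlpos t) (hxpos t)).le ht).trans_eq (by ring)
  exact not_tendsto_zero_of_eventually_le_succ (fun t => mul_pos (hlpos t) (hxpos t)) hgrow
    (by simpa using hlam0.mul hL)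

end RMSProp

theorem stmt_9_general (k : ℕ) (hk : 4 ≤ k) (η β₂ : ℝ) (hη : 0 < η)
    (hβ : 0 < β₂) (hβ1 : β₂ < 1) (lam x : ℕ → ℝ)
    (hlam : ∀ t, lam (t + 1) =
      (1 - η * lam t) ^ (k - 2) * lam t /
        Real.sqrt (β₂ + (1 - β₂) * (1 - η * lam t) ^ (2 * k - 2) * (x t) ^ 2 * (lam t) ^ 2))
    (hx : ∀ t, x (t + 1) = (1 - η * lam t) * x t)
    (h0 : η * lam 0 < 1) (hl0 : 0 < lam 0) (hx0 : 0 < x 0)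
    (hs : ((k : ℝ) - 2) ^ (k - 2) / ((k : ℝ) - 1) ^ (k - 1) < Real.sqrt β₂) :
    (∃ T : ℕ, ∀ t ≥ T, |x (t + 1)| < |x t|) ∧ Tendsto x atTop (nhds 0) := by
  have hinv := RMSProp.lam_pos_and_mul_lam_lt_one_and_x_pos (by omega) hβ hβ1 hs hlam hx h0 hl0 hx0
  have hdec : ∀ t, x (t + 1) < x t := fun t => by
    rw [hx t]
    nlinarith [mul_pos (mul_pos hη (hinv t).1) (hinv t).2.2]
  refine ⟨⟨0, fun t _ => ?_⟩, RMSProp.tendsto_x_zero hη hβ hβ1 hlam hx (fun t => (hinv t).1)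
    (fun t => (hinv t).2.2) hdec⟩
  rw [abs_of_pos (hinv (t + 1)).2.2, abs_of_pos (hinv t).2.2]
  exact hdec t

/-- RMSProp normalized dynamics on `L(x) = x^k/k`: if the initial effective sharpness
satisfies `η λ₀ < 1` (with `λ₀ > 0` coming from `λ₀ = x₀^{k-2}/√v₀`), `x₀ > 0` and
`√β₂ > (k-2)^{k-2}/(k-1)^{k-1}`, then `|x_t|` is eventually strictly decreasing and
`x_t → 0`. -/
theorem stmt_9 (k : ℕ) (hk : 4 ≤ k) (hke : Even k) (η β₂ : ℝ) (hη : 0 < η)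
    (hβ : 0 < β₂) (hβ1 : β₂ < 1) (lam x : ℕ → ℝ)
    (hlam : ∀ t, lam (t + 1) =
      (1 - η * lam t) ^ (k - 2) * lam t /
        Real.sqrt (β₂ + (1 - β₂) * (1 - η * lam t) ^ (2 * k - 2) * (x t) ^ 2 * (lam t) ^ 2))
    (hx : ∀ t, x (t + 1) = (1 - η * lam t) * x t)
    (h0 : η * lam 0 < 1) (hl0 : 0 < lam 0) (hx0 : 0 < x 0)
    (hs : ((k : ℝ) - 2) ^ (k - 2) / ((k : ℝ) - 1) ^ (k - 1) < Real.sqrt β₂) :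
    (∃ T : ℕ, ∀ t ≥ T, |x (t + 1)| < |x t|) ∧ Tendsto x atTop (nhds 0) :=
  stmt_9_general k hk η β₂ hη hβ hβ1 lam x hlam hx h0 hl0 hx0 hs
end

section
/- Let k ≥ 4 be even and β₂ ∈ (0,1). The map g(s) = β₂^{-1/2}(1-s)^{k-2} s on (0,1) has exactly two fixed points in [0,1): s = 0 and s* = 1 - β₂^{1/(2(k-2))}. Moreover g'(0) = β₂^{-1/2} > 1 (so 0 is repelling), g'(s*) = 1 - (k-2)(β₂^{-1/(2(k-2))} - 1) < 1, and g'(s*) > -1 if and only if √β₂ > ((k-2)/k)^{k-2}. -/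
open Real

/-- The limiting RMSProp curvature map `g(s) = β₂^{-1/2}(1-s)^{k-2} s` has exactly the
fixed points `0` and `s* = 1 - β₂^{1/(2(k-2))}` in `[0,1)`; `g'(0) = β₂^{-1/2} > 1`,
`g'(s*) = 1 - (k-2)(β₂^{-1/(2(k-2))} - 1) < 1`, and `g'(s*) > -1` iff
`√β₂ > ((k-2)/k)^{k-2}`. -/
theorem stmt_11 (k : ℕ) (hk : 4 ≤ k) (hke : Even k) (β₂ : ℝ) (hβ : 0 < β₂) (hβ1 : β₂ < 1) :
    (∀ s ∈ Set.Ico (0 : ℝ) 1,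
      (β₂ ^ (-(1 / 2 : ℝ)) * (1 - s) ^ (k - 2) * s = s ↔
        s = 0 ∨ s = 1 - β₂ ^ ((1 : ℝ) / (2 * ((k : ℝ) - 2))))) ∧
    deriv (fun s : ℝ => β₂ ^ (-(1 / 2 : ℝ)) * (1 - s) ^ (k - 2) * s) 0 = β₂ ^ (-(1 / 2 : ℝ)) ∧
    1 < β₂ ^ (-(1 / 2 : ℝ)) ∧
    deriv (fun s : ℝ => β₂ ^ (-(1 / 2 : ℝ)) * (1 - s) ^ (k - 2) * s)
        (1 - β₂ ^ ((1 : ℝ) / (2 * ((k : ℝ) - 2))))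
      = 1 - ((k : ℝ) - 2) * (β₂ ^ (-((1 : ℝ) / (2 * ((k : ℝ) - 2)))) - 1) ∧
    deriv (fun s : ℝ => β₂ ^ (-(1 / 2 : ℝ)) * (1 - s) ^ (k - 2) * s)
        (1 - β₂ ^ ((1 : ℝ) / (2 * ((k : ℝ) - 2)))) < 1 ∧
    (-1 < deriv (fun s : ℝ => β₂ ^ (-(1 / 2 : ℝ)) * (1 - s) ^ (k - 2) * s)
        (1 - β₂ ^ ((1 : ℝ) / (2 * ((k : ℝ) - 2)))) ↔
      ((((k : ℝ) - 2) / (k : ℝ)) ^ (k - 2) < Real.sqrt β₂)) := by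
  have hn2 : 2 ≤ k - 2 := by omega
  set n : ℕ := k - 2 with hn
  have hN : ((n : ℝ)) = (k : ℝ) - 2 := by
    rw [hn]; push_cast [Nat.cast_sub (by omega : 2 ≤ k)]; ring
  have hNpos : (0 : ℝ) < (n : ℝ) := by positivity
  set c : ℝ := β₂ ^ (-(1 / 2 : ℝ)) with hc
  set a : ℝ := β₂ ^ ((1 : ℝ) / (2 * ((k : ℝ) - 2))) with ha
  have he : (1 : ℝ) / (2 * ((k : ℝ) - 2)) = 1 / (2 * (n : ℝ)) := by rw [hN]
  have hepos : 0 < (1 : ℝ) / (2 * ((k : ℝ) - 2)) := by rw [he]; positivity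
  have ha0 : 0 < a := Real.rpow_pos_of_pos hβ _
  have ha1 : a < 1 := Real.rpow_lt_one hβ.le hβ1 hepos
  have han : a ^ n = Real.sqrt β₂ := by
    rw [ha, ← Real.rpow_natCast (β₂ ^ ((1:ℝ)/(2*((k:ℝ)-2)))) n, ← Real.rpow_mul hβ.le,
      Real.sqrt_eq_rpow]
    congr 1
    rw [he]
    field_simp
  have hca : c * a ^ n = 1 := by
    rw [han, hc, Real.sqrt_eq_rpow, ← Real.rpow_add hβ]
    norm_num
  have hc0 : 0 < c := Real.rpow_pos_of_pos hβ _
  have hD : ∀ x : ℝ, deriv (fun s : ℝ => c * (1 - s) ^ n * s) x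
      = c * (((n : ℝ) * (1 - x) ^ (n - 1) * (-1)) * x + (1 - x) ^ n * 1) := by
    intro x
    have h1 : HasDerivAt (fun s : ℝ => 1 - s) (-1) x := by
      simpa using (hasDerivAt_id x).const_sub 1
    have h3 := ((h1.pow n).mul (hasDerivAt_id' (x := x))).const_mul c
    have hfe : (fun s : ℝ => c * (1 - s) ^ n * s) = fun s : ℝ => c * ((1 - s) ^ n * s) := by
      funext s; ring
    rw [hfe]
    exact h3.deriv
  have hainv : 1 < a⁻¹ := by
    have h := mul_inv_cancel₀ ha0.ne'
    nlinarith [inv_pos.mpr ha0]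
  have hrn : β₂ ^ (-((1 : ℝ) / (2 * ((k : ℝ) - 2)))) = a⁻¹ := by
    rw [Real.rpow_neg hβ.le, ha]
  have hpow : a ^ (n - 1) * a = a ^ n := by
    rw [← pow_succ]; congr 1; omega
  -- derivative at the fixed point
  have hDstar : deriv (fun s : ℝ => c * (1 - s) ^ n * s) (1 - a)
      = 1 - ((k : ℝ) - 2) * (β₂ ^ (-((1 : ℝ) / (2 * ((k : ℝ) - 2)))) - 1) := by
    rw [hD, hrn, ← hN]
    have h1a : (1 : ℝ) - (1 - a) = a := by ring
    rw [h1a]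
    have hkey : c * a ^ (n - 1) * a = 1 := by rw [mul_assoc, hpow]; exact hca
    rw [← hpow]
    have hinva : a⁻¹ = c * a ^ (n - 1) := by
      refine inv_eq_of_mul_eq_one_right ?_
      linarith [hkey, mul_comm a (c * a ^ (n-1))]
    rw [hinva]
    linear_combination ((n : ℝ) + 1) * hkey
  refine ⟨?_, ?_, ?_, hDstar, ?_, ?_⟩
  · -- fixed points
    intro s hs
    constructor
    · intro h
      by_cases hs0 : s = 0
      · exact Or.inl hs0
      right
      have hspos : 0 < s := lt_of_le_of_ne hs.1 (Ne.symm hs0)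
      have h2 : c * (1 - s) ^ n = 1 := by
        have := mul_right_cancel₀ hs0 (by linarith [h] : c * (1 - s) ^ n * s = 1 * s)
        exact this
      have h3 : (1 - s) ^ n = a ^ n := by
        have : c * (1 - s) ^ n = c * a ^ n := by rw [h2, hca]
        exact mul_left_cancel₀ hc0.ne' this
      have h4 : (1 - s) = a := by
        have := pow_left_strictMonoOn₀ (n := n) (by omega : n ≠ 0)
          |>.injOn (by simp [sub_nonneg]; exact hs.2.le : (1 - s) ∈ Set.Ici (0:ℝ))
          (ha0.le : a ∈ Set.Ici (0:ℝ)) h3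
        exact this
      linarith
    · rintro (rfl | rfl)
      · simp
      · have h1a : (1 : ℝ) - (1 - a) = a := by ring
        rw [h1a, hca, one_mul]
  · -- derivative at 0
    rw [hD]; simp
  · -- 1 < c
    rw [hc, Real.one_lt_rpow_iff_of_pos hβ]
    right
    constructor
    · exact hβ1
    · norm_num
  · -- deriv < 1
    rw [hDstar, hrn, ← hN]
    nlinarith [hainv, hNpos]
  · -- final iff
    rw [hDstar, hrn, ← hN]
    have hk2 : (k : ℝ) = (n : ℝ) + 2 := by rw [hN]; ring
    rw [hk2]
    have hfrac : (0:ℝ) < (n : ℝ) + 2 := by linarith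
    have step1 : (-1 < 1 - (n : ℝ) * (a⁻¹ - 1)) ↔ (n : ℝ) / ((n : ℝ) + 2) < a := by
      constructor
      · intro h
        rw [div_lt_iff₀ hfrac]
        nlinarith [mul_inv_cancel₀ ha0.ne', inv_pos.mpr ha0]
      · intro h
        rw [div_lt_iff₀ hfrac] at h
        nlinarith [mul_inv_cancel₀ ha0.ne', inv_pos.mpr ha0]
    rw [step1, ← han]
    exact (pow_lt_pow_iff_left₀ (by positivity) ha0.le (by omega)).symm
end

section
/- Let J be the 2×2 Jacobian sub-matrix of the Adam (ω,λ) dynamics at the nontrivial fixed point, with det(J) = β₁ β₂^{-k/(2(k-2))} and 1 - tr(J) + det(J) = (2-k)(1 - β₂^{1/(2(k-2))})(β₁β₂^{-k/(2(k-2))} - β₂^{-1/(2(k-2))}). Then the spectral radius r(J) < 1 if and only if both β₁ < β₂^{k/(2(k-2))} and β₁ > ((k-2)β₂^{-1/(2(k-2))} - k) / ((k - (k-2)β₂^{1/(2(k-2))}) β₂^{-k/(2(k-2))}). -/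
/-!
The eigenvalues `μ₁, μ₂` of a real `2 × 2` matrix have real sum `tr J` and product `det J`, so
they are either both real or complex conjugate. In the real case `1 ∓ tr J + det J = (1 ∓ μ₁)(1 ∓ μ₂)`,
in the conjugate case `det J = |μ₁|²`; either way `r(J) < 1` is the Jury criterion.

For the Adam Jacobian, `det J ≥ 0`, and with `p = β₂^{1/(2(k-2))} ∈ (0,1)` one has
`1 - tr J + det J = (2 - k)(1 - p)(det J - p⁻¹)`, which is positive as soon as `det J < 1 < p⁻¹`.
The remaining conditions `det J < 1` and `1 + tr J + det J > 0` are the two stated bounds on `β₁`.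
-/

def JuryStable (t d : ℝ) : Prop :=
  |d| < 1 ∧ 0 < 1 - t + d ∧ 0 < 1 + t + d

lemma juryStable_add_mul_iff (a b : ℝ) :
    JuryStable (a + b) (a * b) ↔ |a| < 1 ∧ |b| < 1 := by
  simp only [JuryStable, abs_lt]
  constructor
  · rintro ⟨⟨_, _⟩, _, _⟩
    refine ⟨⟨?_, ?_⟩, ⟨?_, ?_⟩⟩ <;> nlinarith
  · rintro ⟨⟨_, _⟩, _, _⟩
    refine ⟨⟨?_, ?_⟩, ?_, ?_⟩ <;> nlinarith

lemma juryStable_conj_iff (x y : ℝ) :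
    JuryStable (2 * x) (x ^ 2 + y ^ 2) ↔ x ^ 2 + y ^ 2 < 1 := by
  simp only [JuryStable, abs_lt]
  constructor
  · rintro ⟨⟨-, h⟩, -, -⟩
    exact h
  · intro h
    refine ⟨⟨by nlinarith [sq_nonneg x, sq_nonneg y], h⟩, ?_, ?_⟩ <;>
      nlinarith [sq_nonneg (1 - x), sq_nonneg (1 + x)]

lemma juryStable_iff_of_add_eq_of_mul_eq {μ₁ μ₂ : ℂ} {t d : ℝ} (hsum : μ₁ + μ₂ = t)
    (hprod : μ₁ * μ₂ = d) : JuryStable t d ↔ ‖μ₁‖ < 1 ∧ ‖μ₂‖ < 1 := by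
  have him : μ₂.im = -μ₁.im := by
    have := congrArg Complex.im hsum
    simp only [Complex.add_im, Complex.ofReal_im] at this
    linarith
  have hcross : μ₁.im * (μ₂.re - μ₁.re) = 0 := by
    have := congrArg Complex.im hprod
    simp only [Complex.mul_im, him, mul_neg, Complex.ofReal_im] at this
    linarith
  rcases mul_eq_zero.1 hcross with hreal | hconj
  · obtain ⟨a, rfl⟩ : ∃ a : ℝ, μ₁ = a := ⟨μ₁.re, Complex.ext rfl (by simp [hreal])⟩
    obtain ⟨b, rfl⟩ : ∃ b : ℝ, μ₂ = b := ⟨μ₂.re, Complex.ext rfl (by simp [him])⟩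
    obtain rfl : t = a + b := by exact_mod_cast hsum.symm
    obtain rfl : d = a * b := by exact_mod_cast hprod.symm
    simpa only [Complex.norm_real, Real.norm_eq_abs] using juryStable_add_mul_iff a b
  · obtain rfl : μ₂ = (starRingEnd ℂ) μ₁ := Complex.ext (by rw [Complex.conj_re]; linarith) (by simp [him])
    obtain rfl : t = 2 * μ₁.re := by
      have := congrArg Complex.re hsum
      simp only [Complex.add_re, Complex.conj_re, Complex.ofReal_re] at this
      linarith
    obtain rfl : d = μ₁.re ^ 2 + μ₁.im ^ 2 := by
      have := congrArg Complex.re hprod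
      simp only [Complex.mul_re, Complex.conj_re, Complex.conj_im, mul_neg, sub_neg_eq_add,
        Complex.ofReal_re] at this
      linarith
    rw [juryStable_conj_iff, Complex.norm_conj, and_self, ← sq_lt_one_iff₀ (norm_nonneg _),
      Complex.sq_norm, Complex.normSq_apply, sq, sq]

lemma Complex.exists_add_eq_mul_eq (t d : ℂ) : ∃ μ₁ μ₂ : ℂ, μ₁ + μ₂ = t ∧ μ₁ * μ₂ = d := by
  obtain ⟨s, hs⟩ := IsAlgClosed.exists_eq_mul_self (t ^ 2 - 4 * d)
  exact ⟨(t + s) / 2, (t - s) / 2, by ring, by linear_combination hs / 4⟩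

lemma Matrix.mem_spectrum_map_ofReal_iff (J : Matrix (Fin 2) (Fin 2) ℝ) (μ : ℂ) :
    μ ∈ spectrum ℂ (J.map ((↑) : ℝ → ℂ)) ↔ μ ^ 2 - J.trace * μ + J.det = 0 := by
  rw [Matrix.mem_spectrum_iff_isRoot_charpoly, Matrix.charpoly_fin_two]
  simp [Matrix.trace_fin_two, Matrix.det_fin_two]

theorem Matrix.juryStable_iff (J : Matrix (Fin 2) (Fin 2) ℝ) :
    JuryStable J.trace J.det ↔ ∀ μ ∈ spectrum ℂ (J.map ((↑) : ℝ → ℂ)), ‖μ‖ < 1 := by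
  obtain ⟨μ₁, μ₂, hsum, hprod⟩ := Complex.exists_add_eq_mul_eq J.trace J.det
  have hspec (μ : ℂ) : μ ∈ spectrum ℂ (J.map ((↑) : ℝ → ℂ)) ↔ μ = μ₁ ∨ μ = μ₂ := by
    rw [mem_spectrum_map_ofReal_iff, ← hsum, ← hprod,
      show μ ^ 2 - (μ₁ + μ₂) * μ + μ₁ * μ₂ = (μ - μ₁) * (μ - μ₂) by ring, mul_eq_zero,
      sub_eq_zero, sub_eq_zero]
  simp only [juryStable_iff_of_add_eq_of_mul_eq hsum hprod, hspec, forall_eq_or_imp, forall_eq]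
lemma juryStable_iff_of_one_sub_add_eq {K p t d : ℝ} (hK : 2 < K) (hp₀ : 0 < p) (hp₁ : p < 1)
    (hd : 0 ≤ d) (ht : 1 - t + d = (2 - K) * (1 - p) * (d - p⁻¹)) :
    JuryStable t d ↔ d < 1 ∧ (K - 2) * p⁻¹ - K < d * (K - (K - 2) * p) := by
  have hinv : p * p⁻¹ = 1 := mul_inv_cancel₀ hp₀.ne'
  have hone_add : 1 + t + d = d * (K - (K - 2) * p) + K - (K - 2) * p⁻¹ := by
    linear_combination -ht + (K - 2) * hinv
  have hone_sub : d < 1 → 0 < 1 - t + d := fun hd₁ ↦ by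
    have : 1 < p⁻¹ := (one_lt_inv₀ hp₀).2 hp₁
    rw [ht]
    exact mul_pos_of_neg_of_neg (mul_neg_of_neg_of_pos (by linarith) (by linarith)) (by linarith)
  rw [JuryStable, abs_of_nonneg hd, hone_add]
  constructor
  · rintro ⟨hd₁, -, h⟩
    exact ⟨hd₁, by linarith⟩
  · rintro ⟨hd₁, h⟩
    exact ⟨hd₁, hone_sub hd₁, by linarith⟩

theorem stmt_16_general (k : ℕ) (hk : 4 ≤ k) (β₁ β₂ : ℝ)
    (hβ₁ : 0 ≤ β₁) (hβ₂ : 0 < β₂) (hβ₂1 : β₂ < 1)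
    (J : Matrix (Fin 2) (Fin 2) ℝ)
    (hdet : J.det = β₁ * β₂ ^ (-((k : ℝ) / (2 * ((k : ℝ) - 2)))))
    (htr : 1 - J.trace + J.det =
      (2 - (k : ℝ)) * (1 - β₂ ^ ((1 : ℝ) / (2 * ((k : ℝ) - 2)))) *
        (β₁ * β₂ ^ (-((k : ℝ) / (2 * ((k : ℝ) - 2)))) -
          β₂ ^ (-((1 : ℝ) / (2 * ((k : ℝ) - 2)))))) :
    ((∀ μ ∈ spectrum ℂ (J.map (fun a : ℝ => (a : ℂ))), ‖μ‖ < 1) ↔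
      (β₁ < β₂ ^ ((k : ℝ) / (2 * ((k : ℝ) - 2))) ∧
       (((k : ℝ) - 2) * β₂ ^ (-((1 : ℝ) / (2 * ((k : ℝ) - 2)))) - (k : ℝ)) /
           (((k : ℝ) - ((k : ℝ) - 2) * β₂ ^ ((1 : ℝ) / (2 * ((k : ℝ) - 2)))) *
             β₂ ^ (-((k : ℝ) / (2 * ((k : ℝ) - 2))))) < β₁)) := by
  have hK : (2 : ℝ) < k := by norm_cast; omega
  simp only [Real.rpow_neg hβ₂.le] at hdet htr ⊢
  set p := β₂ ^ ((1 : ℝ) / (2 * ((k : ℝ) - 2)))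
  set q := β₂ ^ ((k : ℝ) / (2 * ((k : ℝ) - 2)))
  have hp₀ : 0 < p := Real.rpow_pos_of_pos hβ₂ _
  have hp₁ : p < 1 := Real.rpow_lt_one hβ₂.le hβ₂1 (by apply div_pos <;> linarith)
  have hq₀ : 0 < q := Real.rpow_pos_of_pos hβ₂ _
  have hden : 0 < (k - (k - 2) * p) * q⁻¹ := mul_pos (by nlinarith) (inv_pos.2 hq₀)
  rw [← Matrix.juryStable_iff, juryStable_iff_of_one_sub_add_eq hK hp₀ hp₁
    (by rw [hdet]; positivity) (by rw [htr, hdet]), hdet, mul_inv_lt_iff₀ hq₀, one_mul, div_lt_iff₀ hden]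
  constructor <;> rintro ⟨h₁, h₂⟩ <;> exact ⟨h₁, by linarith⟩

/-- Jury criterion applied to the Adam Jacobian: given the determinant and the value
`1 - tr J + det J` of the 2×2 Jacobian `J` at the nontrivial fixed point, the spectral
radius satisfies `r(J) < 1` iff `β₁ < β₂^{k/(2(k-2))}` and
`β₁ > ((k-2)β₂^{-1/(2(k-2))} - k)/((k-(k-2)β₂^{1/(2(k-2))})β₂^{-k/(2(k-2))})`. -/
theorem stmt_16 (k : ℕ) (hk : 4 ≤ k) (hke : Even k) (β₁ β₂ : ℝ)
    (hβ₁ : 0 ≤ β₁) (hβ₁1 : β₁ < 1) (hβ₂ : 0 < β₂) (hβ₂1 : β₂ < 1)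
    (J : Matrix (Fin 2) (Fin 2) ℝ)
    (hdet : J.det = β₁ * β₂ ^ (-((k : ℝ) / (2 * ((k : ℝ) - 2)))))
    (htr : 1 - J.trace + J.det =
      (2 - (k : ℝ)) * (1 - β₂ ^ ((1 : ℝ) / (2 * ((k : ℝ) - 2)))) *
        (β₁ * β₂ ^ (-((k : ℝ) / (2 * ((k : ℝ) - 2)))) -
          β₂ ^ (-((1 : ℝ) / (2 * ((k : ℝ) - 2)))))) :
    ((∀ μ ∈ spectrum ℂ (J.map (fun a : ℝ => (a : ℂ))), ‖μ‖ < 1) ↔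
      (β₁ < β₂ ^ ((k : ℝ) / (2 * ((k : ℝ) - 2))) ∧
       (((k : ℝ) - 2) * β₂ ^ (-((1 : ℝ) / (2 * ((k : ℝ) - 2)))) - (k : ℝ)) /
           (((k : ℝ) - ((k : ℝ) - 2) * β₂ ^ ((1 : ℝ) / (2 * ((k : ℝ) - 2)))) *
             β₂ ^ (-((k : ℝ) / (2 * ((k : ℝ) - 2))))) < β₁)) :=
  stmt_16_general k hk β₁ β₂ hβ₁ hβ₂ hβ₂1 J hdet htr
end
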